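/- Let n be a natural number, σ > 0 a real number, and γ the probability measure on Matrix (Fin n) (Fin n) ℝ given by the product measure whose coordinates are all gaussianReal 0 σ². Let D be an orthogonal n×n real matrix, i.e. D * Dᵀ = 1. Then the pushforward of γ under the map A ↦ D * (A + Aᵀ) * Dᵀ equals the pushforward of γ under the map A ↦ A + Aᵀ. In other words, the law of the symmetric Gaussian random matrix M = A + Aᵀ is invariant under conjugation by D. -/

import Mathlib

/-!
Identify a matrix with its vector of entries in `EuclideanSpace ℝ (ι × ι)`. Conjugation
`A ↦ D * A * Dᵀ` then acts as the Kronecker square `D ⊗ₖ D`, which is again orthogonal. An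
i.i.d. centred Gaussian vector has characteristic function `t ↦ exp (-v ‖t‖² / 2)`, which only
depends on `‖t‖`, so its law is invariant under every linear isometry. Hence the i.i.d. Gaussian
matrix law is invariant under conjugation, and so is its image under `A ↦ A + Aᵀ`, since
symmetrization commutes with conjugation.
-/

open Matrix MeasureTheory ProbabilityTheory
open scoped NNReal Kronecker

instance matrixMeasurableSpace {m n α : Type*} [MeasurableSpace α] :
    MeasurableSpace (Matrix m n α) :=
  inferInstanceAs (MeasurableSpace (m → n → α))

instance Matrix.borelSpace {m n α : Type*} [Countable m] [Countable n] [TopologicalSpace α]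
    [MeasurableSpace α] [SecondCountableTopology α] [BorelSpace α] : BorelSpace (Matrix m n α) :=
  inferInstanceAs (BorelSpace (m → n → α))

lemma MeasureTheory.charFun_map_linearIsometryEquiv {E F : Type*} [NormedAddCommGroup E]
    [InnerProductSpace ℝ E] [MeasurableSpace E] [BorelSpace E] [NormedAddCommGroup F]
    [InnerProductSpace ℝ F] [MeasurableSpace F] [BorelSpace F]
    (μ : Measure E) (f : E ≃ₗᵢ[ℝ] F) (t : F) :
    charFun (μ.map f) t = charFun μ (f.symm t) := by
  rw [charFun_apply, integral_map f.continuous.aemeasurable (by fun_prop), charFun_apply]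
  simp_rw [f.inner_map_eq_flip]

lemma MeasureTheory.Measure.map_uncurry_pi_pi {ι κ X : Type*} [Fintype ι] [Fintype κ]
    [MeasurableSpace X] (μ : ι → κ → Measure X) [∀ i j, SigmaFinite (μ i j)] :
    (Measure.pi fun i => Measure.pi fun j => μ i j).map Function.uncurry =
      Measure.pi fun p : ι × κ => μ p.1 p.2 := by
  refine (Measure.pi_eq fun s hs => ?_).symm
  have hpre : Function.uncurry ⁻¹' Set.univ.pi s =
      Set.univ.pi fun i => Set.univ.pi fun j => s (i, j) := by
    ext; simp
  rw [Measure.map_apply measurable_uncurry (.univ_pi hs), hpre, Measure.pi_pi]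
  simp_rw [Measure.pi_pi, Fintype.prod_prod_type]

namespace ProbabilityTheory

variable {ι : Type*} [Fintype ι]

lemma charFun_map_pi_gaussianReal (v : ℝ≥0) (t : EuclideanSpace ℝ ι) :
    charFun ((Measure.pi fun _ : ι => gaussianReal 0 v).map (WithLp.toLp 2)) t =
      Complex.exp (-(v * ‖t‖ ^ 2 / 2)) := by
  simp_rw [charFun_pi, charFun_gaussianReal, ← Complex.exp_sum, ← Complex.ofReal_pow,
    EuclideanSpace.real_norm_sq_eq]
  push_cast
  simp [Finset.mul_sum, Finset.sum_div, sub_eq_add_neg]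

lemma map_pi_gaussianReal_linearIsometryEquiv (v : ℝ≥0)
    (f : EuclideanSpace ℝ ι ≃ₗᵢ[ℝ] EuclideanSpace ℝ ι) :
    ((Measure.pi fun _ : ι => gaussianReal 0 v).map (WithLp.toLp 2)).map f =
      (Measure.pi fun _ : ι => gaussianReal 0 v).map (WithLp.toLp 2) := by
  refine Measure.ext_of_charFun (funext fun t => ?_)
  rw [charFun_map_linearIsometryEquiv, charFun_map_pi_gaussianReal, charFun_map_pi_gaussianReal,
    LinearIsometryEquiv.norm_map]

end ProbabilityTheory

namespace Matrix

variable {ι : Type*} [Fintype ι]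

lemma uncurry_mul_mul_transpose (D A : Matrix ι ι ℝ) :
    Function.uncurry (D * A * Dᵀ) = (D ⊗ₖ D) *ᵥ Function.uncurry A := by
  have h : (D * Aᵀ * Dᵀ)ᵀ = D * A * Dᵀ := by simp [Matrix.mul_assoc]
  rw [← h]
  exact (kronecker_mulVec_vec D Aᵀ D).symm

lemma kronecker_mul_transpose_self {κ : Type*} [Fintype κ] [DecidableEq ι] [DecidableEq κ]
    {U : Matrix ι ι ℝ} {V : Matrix κ κ ℝ} (hU : U * Uᵀ = 1) (hV : V * Vᵀ = 1) :
    (U ⊗ₖ V) * (U ⊗ₖ V)ᵀ = 1 := by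
  rw [← kroneckerMap_transpose, ← mul_kronecker_mul, hU, hV, one_kronecker_one]

variable [DecidableEq ι]

noncomputable def orthogonalLinearIsometryEquiv (U : Matrix ι ι ℝ) (hU : U * Uᵀ = 1) :
    EuclideanSpace ℝ ι ≃ₗᵢ[ℝ] EuclideanSpace ℝ ι :=
  Unitary.linearIsometryEquiv ⟨toEuclideanCLM (𝕜 := ℝ) U, Unitary.map_mem _ <|
    mem_unitaryGroup_iff.2 (by rwa [star_eq_conjTranspose, conjTranspose_eq_transpose_of_trivial])⟩

end Matrix

lemma ProbabilityTheory.map_conj_pi_pi_gaussianReal {ι : Type*} [Fintype ι] [DecidableEq ι]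
    (v : ℝ≥0) {D : Matrix ι ι ℝ} (hD : D * Dᵀ = 1) :
    (Measure.pi fun _ : ι => Measure.pi fun _ : ι => gaussianReal 0 v).map
        (fun A : Matrix ι ι ℝ => D * A * Dᵀ) =
      Measure.pi fun _ : ι => Measure.pi fun _ : ι => gaussianReal 0 v := by
  set γ : Measure (Matrix ι ι ℝ) := Measure.pi fun _ : ι => Measure.pi fun _ : ι => gaussianReal 0 v
  set conj := fun A : Matrix ι ι ℝ => D * A * Dᵀ
  let e : Matrix ι ι ℝ ≃ᵐ EuclideanSpace ℝ (ι × ι) :=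
    (MeasurableEquiv.curry ι ι ℝ).symm.trans (MeasurableEquiv.toLp 2 _)
  let f := orthogonalLinearIsometryEquiv (D ⊗ₖ D) (kronecker_mul_transpose_self hD hD)
  have he : γ.map e = (Measure.pi fun _ : ι × ι => gaussianReal 0 v).map (WithLp.toLp 2) :=
    (Measure.map_map (by fun_prop) measurable_uncurry).symm.trans <| by
      rw [Measure.map_uncurry_pi_pi]
  have hconj : e ∘ conj = f ∘ e := by
    funext A
    show WithLp.toLp 2 (Function.uncurry (D * A * Dᵀ)) =
      WithLp.toLp 2 ((D ⊗ₖ D) *ᵥ Function.uncurry A)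
    rw [uncurry_mul_mul_transpose]
  refine e.map_measurableEquiv_injective ?_
  calc (γ.map conj).map e = γ.map (e ∘ conj) := Measure.map_map e.measurable (by fun_prop)
    _ = (γ.map e).map f := by rw [hconj, Measure.map_map (by fun_prop) e.measurable]
    _ = γ.map e := by rw [he, map_pi_gaussianReal_linearIsometryEquiv]

theorem goe_orthogonal_conj_invariant_general
    (n : ℕ) (σ : ℝ)
    (γ : Measure (Matrix (Fin n) (Fin n) ℝ))
    (hγ : γ = Measure.pi fun _ : Fin n =>
      Measure.pi fun _ : Fin n => gaussianReal 0 ⟨σ ^ 2, sq_nonneg σ⟩)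
    (D : Matrix (Fin n) (Fin n) ℝ) (hD : D * Dᵀ = 1) :
    Measure.map (fun A : Matrix (Fin n) (Fin n) ℝ => D * (A + Aᵀ) * Dᵀ) γ =
      Measure.map (fun A : Matrix (Fin n) (Fin n) ℝ => A + Aᵀ) γ := by
  have hsymm_conj : (fun A : Matrix (Fin n) (Fin n) ℝ => D * (A + Aᵀ) * Dᵀ) =
      (fun A => A + Aᵀ) ∘ fun A => D * A * Dᵀ := by
    funext A
    simp [Matrix.mul_add, Matrix.add_mul, Matrix.transpose_mul, Matrix.mul_assoc]
  have hconj_meas : Measurable fun A : Matrix (Fin n) (Fin n) ℝ => D * A * Dᵀ := by fun_prop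
  have hsymm_meas : Measurable fun A : Matrix (Fin n) (Fin n) ℝ => A + Aᵀ :=
    (continuous_id.add continuous_id.matrix_transpose).measurable
  rw [hsymm_conj, ← Measure.map_map hsymm_meas hconj_meas, hγ]
  exact congrArg _ (map_conj_pi_pi_gaussianReal _ hD)

/-- The law of the symmetric Gaussian (GOE) matrix `M = A + Aᵀ`, with `A` having
i.i.d. `gaussianReal 0 σ²` entries, is invariant under conjugation by an orthogonal
matrix `D`: pushing forward by `A ↦ D * (A + Aᵀ) * Dᵀ` gives the same measure as
pushing forward by `A ↦ A + Aᵀ`. -/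
theorem goe_orthogonal_conj_invariant
    (n : ℕ) (σ : ℝ) (hσ : 0 < σ)
    (γ : Measure (Matrix (Fin n) (Fin n) ℝ))
    (hγ : γ = Measure.pi fun _ : Fin n =>
      Measure.pi fun _ : Fin n => gaussianReal 0 ⟨σ ^ 2, sq_nonneg σ⟩)
    (D : Matrix (Fin n) (Fin n) ℝ) (hD : D * Dᵀ = 1) :
    Measure.map (fun A : Matrix (Fin n) (Fin n) ℝ => D * (A + Aᵀ) * Dᵀ) γ =
      Measure.map (fun A : Matrix (Fin n) (Fin n) ℝ => A + Aᵀ) γ :=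
  goe_orthogonal_conj_invariant_general n σ γ hγ D hD
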